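/- Let D be a dendrite (a metrizable dendron) and let G be a group acting on D by homeomorphisms. If a map p : D → D lies in the closure, in the product (pointwise convergence) topology on D^D, of the set of translation maps {x ↦ g • x : g ∈ G} (i.e., p is an element of the enveloping semigroup of the action), then p is interval preserving and of Baire class 1: the preimage p⁻¹(O) of every open set O ⊆ D is an F_σ subset of D. -/

import Mathlib

/-!
A dendron is locally connected: otherwise boundary bumping produces infinitely many disjoint
continua, each running from a small closed neighbourhood `M` of a point to the frontier of a
larger one `N`; a point separating a cluster pair of their endpoints would lie in two of them.
In a locally connected regular space betweenness is a closed relation: if `w` is not between `u`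
and `v`, the component of `{w}ᶜ` containing them contains a connected open set `K ∋ u, v` with
`w ∉ closure K`, and `K` witnesses the same for all nearby triples. Homeomorphisms preserve
betweenness, hence so does every pointwise limit `p` of translations.

For the Baire class, let `K ⊆ O` with `K` closed and connected. A point separating two points of
`closure (p⁻¹ K) \ p⁻¹ O` is mapped into `K` and between their images, so distinct such points are
mapped into distinct components of `Kᶜ`; all of these components meet `Oᶜ` and have closures
meeting `K`, so by the same compactness argument there are finitely many of them. Thus
`closure (p⁻¹ K) ∩ p⁻¹ O` is a closed set minus a finite set, and `p⁻¹ O` is the union of these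
sets over a countable network of closed connected sets.
-/

/-- A point `w` separates the points `u` and `v` in a topological space `X` if the complement
of `{w}` is the union of two disjoint open sets, one containing `u` and the other `v`. -/
def Separates {X : Type*} [TopologicalSpace X] (w u v : X) : Prop :=
  ∃ U V : Set X, IsOpen U ∧ IsOpen V ∧ u ∈ U ∧ v ∈ V ∧ Disjoint U V ∧ ({w}ᶜ : Set X) = U ∪ V

/-- `w` is between `u` and `v`: `w` separates `u` and `v`, or `w ∈ {u, v}`. -/
def Between {X : Type*} [TopologicalSpace X] (u w v : X) : Prop :=
  Separates w u v ∨ w = u ∨ w = v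

open Set Filter Topology Function

def IsPointSeparated (X : Type*) [TopologicalSpace X] : Prop :=
  ∀ u v : X, u ≠ v → ∃ w, Separates w u v

def IntervalPreserving {X : Type*} [TopologicalSpace X] (f : X → X) : Prop :=
  ∀ u w v : X, Between u w v → Between (f u) (f w) (f v)

section Separation

variable {X Y : Type*} [TopologicalSpace X] [TopologicalSpace Y]

theorem IsPreconnected.mem_of_separates {S : Set X} (hS : IsPreconnected S) {u v w : X}
    (hu : u ∈ S) (hv : v ∈ S) (h : Separates w u v) : w ∈ S := by
  by_contra hw
  obtain ⟨U, V, hU, hV, huU, hvV, hUV, hc⟩ := h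
  have hSUV : S ⊆ U ∪ V := fun x hx => by
    rw [← hc]
    exact fun hxw => hw (hxw ▸ hx)
  obtain ⟨x, -, hxU, hxV⟩ := hS U V hU hV hSUV ⟨u, hu, huU⟩ ⟨v, hv, hvV⟩
  exact hUV.le_bot ⟨hxU, hxV⟩

theorem IsPreconnected.mem_of_between {S : Set X} (hS : IsPreconnected S) {u v w : X}
    (hu : u ∈ S) (hv : v ∈ S) (h : Between u w v) : w ∈ S := by
  rcases h with h | rfl | rfl
  exacts [hS.mem_of_separates hu hv h, hu, hv]

theorem Separates.map_homeomorph (f : X ≃ₜ Y) {w u v : X} (h : Separates w u v) :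
    Separates (f w) (f u) (f v) := by
  obtain ⟨U, V, hU, hV, hu, hv, hUV, hc⟩ := h
  refine ⟨f '' U, f '' V, f.isOpenMap U hU, f.isOpenMap V hV, mem_image_of_mem f hu,
    mem_image_of_mem f hv, (disjoint_image_iff f.injective).2 hUV, ?_⟩
  rw [← image_singleton, ← f.image_compl, hc, image_union]

theorem Between.map_homeomorph (f : X ≃ₜ Y) {u w v : X} (h : Between u w v) :
    Between (f u) (f w) (f v) := by
  rcases h with h | rfl | rfl
  exacts [Or.inl (h.map_homeomorph f), Or.inr (Or.inl rfl), Or.inr (Or.inr rfl)]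

end Separation

section Components

variable {X : Type*} [TopologicalSpace X]

theorem IsClosed.connectedComponentIn {F : Set X} (hF : IsClosed F) (x : X) :
    IsClosed (connectedComponentIn F x) := by
  by_cases hx : x ∈ F
  · rw [connectedComponentIn_eq_image hx]
    exact hF.isClosedEmbedding_subtypeVal.isClosedMap _ isClosed_connectedComponent
  · rw [connectedComponentIn_eq_empty hx]
    exact isClosed_empty

theorem disjoint_connectedComponentIn_of_ne {F : Set X} {x y : X}
    (h : connectedComponentIn F x ≠ connectedComponentIn F y) :
    Disjoint (connectedComponentIn F x) (connectedComponentIn F y) :=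
  disjoint_left.2 fun _ hx hy =>
    h ((connectedComponentIn_eq hx).trans (connectedComponentIn_eq hy).symm)

end Components

section Dendron

variable {X : Type*} [TopologicalSpace X] [CompactSpace X]

theorem IsPointSeparated.finite_of_pairwise_disjoint (hX : IsPointSeparated X)
    {F₁ F₂ : Set X} (hF₁ : IsClosed F₁) (hF₂ : IsClosed F₂) (hF : Disjoint F₁ F₂)
    {ι : Type*} {A : ι → Set X} (hA : Pairwise (Disjoint on A))
    (hAc : ∀ i, IsPreconnected (A i)) (h₁ : ∀ i, (A i ∩ F₁).Nonempty)
    (h₂ : ∀ i, (closure (A i) ∩ F₂).Nonempty) : Finite ι := by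
  by_contra hι
  rw [not_finite_iff_infinite] at hι
  choose x hx using h₁
  choose y hy using h₂
  obtain ⟨⟨a, b⟩, -, hab⟩ := isCompact_univ.exists_mapClusterPt (f := cofinite)
    (u := fun i => (x i, y i)) (by simp)
  have ha : a ∈ F₁ := by
    by_contra ha
    obtain ⟨i, hi⟩ := (hab.frequently (continuous_fst.continuousAt.preimage_mem_nhds
      (hF₁.isOpen_compl.mem_nhds ha))).exists
    exact hi (hx i).2
  have hb : b ∈ F₂ := by
    by_contra hb
    obtain ⟨i, hi⟩ := (hab.frequently (continuous_snd.continuousAt.preimage_mem_nhds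
      (hF₂.isOpen_compl.mem_nhds hb))).exists
    exact hi (hy i).2
  obtain ⟨w, U, V, hU, hV, haU, hbV, hUV, hc⟩ := hX a b (hF.ne_of_mem ha hb)
  have hw : ∀ i, x i ∈ U → y i ∈ V → w ∈ A i := by
    intro i hxi hyi
    obtain ⟨z, hzV, hzA⟩ := mem_closure_iff.1 (hy i).1 V hV hyi
    exact (hAc i).mem_of_separates (hx i).1 hzA ⟨U, V, hU, hV, hxi, hzV, hUV, hc⟩
  have hfreq : ∃ᶠ i in cofinite, x i ∈ U ∧ y i ∈ V :=
    hab.frequently (prod_mem_nhds (hU.mem_nhds haU) (hV.mem_nhds hbV))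
  obtain ⟨i, hi, j, hj, hij⟩ := (frequently_cofinite_iff_infinite.1 hfreq).nontrivial
  exact (hA hij).le_bot ⟨hw i hi.1 hi.2, hw j hj.1 hj.2⟩

variable [T2Space X] [ConnectedSpace X]

theorem connectedComponentIn_inter_frontier_nonempty {K : Set X} (hK : IsClosed K)
    (hKu : K ≠ univ) {x : X} (hx : x ∈ K) :
    (connectedComponentIn K x ∩ frontier K).Nonempty := by
  by_contra h
  have : CompactSpace K := isCompact_iff_compactSpace.1 hK.isCompact
  let x' : K := ⟨x, hx⟩
  have hcc : connectedComponent x' ⊆ (Subtype.val ⁻¹' frontier K)ᶜ := by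
    intro z hz hzK
    exact h ⟨z, by rw [connectedComponentIn_eq_image hx]; exact ⟨z, hz, rfl⟩, hzK⟩
  obtain ⟨⟨Z, hZ, hxZ⟩, hZK⟩ : ∃ Z : {Z : Set K // IsClopen Z ∧ x' ∈ Z},
      Z.1 ⊆ (Subtype.val ⁻¹' frontier K)ᶜ := by
    have : Nonempty {Z : Set K // IsClopen Z ∧ x' ∈ Z} := ⟨⟨univ, isClopen_univ, mem_univ _⟩⟩
    refine exists_subset_nhds_of_compactSpace ?_ (fun Z => Z.2.1.1) fun z hz => ?_
    · rintro ⟨Z₁, hZ₁, hx₁⟩ ⟨Z₂, hZ₂, hx₂⟩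
      exact ⟨⟨Z₁ ∩ Z₂, hZ₁.inter hZ₂, hx₁, hx₂⟩, inter_subset_left, inter_subset_right⟩
    · rw [← connectedComponent_eq_iInter_isClopen] at hz
      exact (isClosed_frontier.preimage continuous_subtype_val).isOpen_compl.mem_nhds (hcc hz)
  -- `Z` avoids the frontier of `K`, so its image is open in `X` as well as closed
  obtain ⟨W, hW, rfl⟩ := isOpen_induced_iff.1 hZ.2
  have hWK : W ∩ K = W ∩ interior K := by
    refine subset_antisymm (fun z ⟨hzW, hzK⟩ => ⟨hzW, ?_⟩)
      (inter_subset_inter_right _ interior_subset)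
    by_contra hz
    exact hZK (show (⟨z, hzK⟩ : K) ∈ Subtype.val ⁻¹' W from hzW) ⟨subset_closure hzK, hz⟩
  have hclopen : IsClopen (W ∩ K) := by
    refine ⟨?_, hWK ▸ hW.inter isOpen_interior⟩
    rw [inter_comm, ← Subtype.image_preimage_coe]
    exact hK.isClosedEmbedding_subtypeVal.isClosedMap _ hZ.1
  exact hKu (eq_univ_of_univ_subset
    (hclopen.eq_univ ⟨x, hxZ, hx⟩ ▸ inter_subset_right))

theorem IsPointSeparated.finite_connectedComponentIn_image (hX : IsPointSeparated X)
    {N M : Set X} (hNc : IsClosed N) (hNu : N ≠ univ) (hMc : IsClosed M)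
    (hMN : M ⊆ interior N) : (connectedComponentIn N '' M).Finite := by
  have hMN' : M ⊆ N := hMN.trans interior_subset
  refine finite_coe_iff.1 (hX.finite_of_pairwise_disjoint hMc isClosed_frontier
    (disjoint_interior_frontier.mono_left hMN) (A := ((↑) : _ → Set X)) ?_ ?_ ?_ ?_)
  · intro S T hne
    obtain ⟨y, -, hy⟩ := S.2
    obtain ⟨z, -, hz⟩ := T.2
    have hyz : connectedComponentIn N y ≠ connectedComponentIn N z := by
      rw [hy, hz]
      exact Subtype.coe_injective.ne hne
    simpa only [onFun, hy, hz] using disjoint_connectedComponentIn_of_ne hyz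
  · rintro ⟨_, y, -, rfl⟩
    exact isPreconnected_connectedComponentIn
  · rintro ⟨_, y, hyM, rfl⟩
    exact ⟨y, mem_connectedComponentIn (hMN' hyM), hyM⟩
  · rintro ⟨_, y, hyM, rfl⟩
    obtain ⟨z, hz, hzN⟩ := connectedComponentIn_inter_frontier_nonempty hNc hNu (hMN' hyM)
    exact ⟨z, subset_closure hz, hzN⟩

theorem IsPointSeparated.locallyConnectedSpace (hX : IsPointSeparated X) :
    LocallyConnectedSpace X := by
  rw [locallyConnectedSpace_iff_connected_subsets]
  intro x U hU
  obtain ⟨N, hN, hNc, hNU⟩ := exists_mem_nhds_isClosed_subset hU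
  by_cases hNu : N = univ
  · exact ⟨univ, univ_mem, isPreconnected_univ, hNu ▸ hNU⟩
  refine ⟨connectedComponentIn N x, ?_, isPreconnected_connectedComponentIn,
    (connectedComponentIn_subset _ _).trans hNU⟩
  obtain ⟨M, hM, hMc, hMN⟩ := exists_mem_nhds_isClosed_subset (interior_mem_nhds.2 hN)
  have hMN' : M ⊆ N := hMN.trans interior_subset
  let 𝒮 : Set (Set X) := connectedComponentIn N '' (M \ connectedComponentIn N x)
  have hclosed : IsClosed (⋃₀ 𝒮) := by
    rw [sUnion_eq_biUnion]
    refine ((hX.finite_connectedComponentIn_image hNc hNu hMc hMN).subset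
      (image_mono sdiff_subset)).isClosed_biUnion ?_
    rintro _ ⟨y, -, rfl⟩
    exact hNc.connectedComponentIn y
  have hx : x ∉ ⋃₀ 𝒮 := by
    rintro ⟨_, ⟨y, ⟨hyM, hy⟩, rfl⟩, hxy⟩
    exact hy (connectedComponentIn_eq hxy ▸ mem_connectedComponentIn (hMN' hyM))
  refine mem_of_superset (inter_mem hM (hclosed.isOpen_compl.mem_nhds hx)) ?_
  rintro y ⟨hyM, hy𝒮⟩
  by_contra hy
  exact hy𝒮 ⟨_, ⟨y, ⟨hyM, hy⟩, rfl⟩, mem_connectedComponentIn (hMN' hyM)⟩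

end Dendron

section LocallyConnected

variable {X : Type*} [TopologicalSpace X] [LocallyConnectedSpace X]

theorem mem_connectedComponentIn_compl_singleton_of_not_between [T1Space X] {u w v : X}
    (h : ¬Between u w v) : v ∈ connectedComponentIn {w}ᶜ u := by
  simp only [Between, not_or] at h
  obtain ⟨hsep, hwu, hwv⟩ := h
  by_contra hv
  set C := connectedComponentIn {w}ᶜ u
  refine hsep ⟨C, {w}ᶜ \ C, isOpen_compl_singleton.connectedComponentIn, ?_,
    mem_connectedComponentIn (Ne.symm hwu), ⟨Ne.symm hwv, hv⟩, disjoint_sdiff_right,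
    (union_sdiff_cancel (connectedComponentIn_subset _ _)).symm⟩
  refine isOpen_iff_forall_mem_open.2 fun y ⟨hyw, hyC⟩ => ⟨connectedComponentIn {w}ᶜ y,
    fun z hz => ⟨connectedComponentIn_subset _ _ hz, fun hzC => ?_⟩,
    isOpen_compl_singleton.connectedComponentIn, mem_connectedComponentIn hyw⟩
  have hne : connectedComponentIn {w}ᶜ y ≠ C := fun h => hyC (h ▸ mem_connectedComponentIn hyw)
  exact (disjoint_connectedComponentIn_of_ne hne).le_bot ⟨hz, hzC⟩

variable [RegularSpace X]

theorem IsOpen.exists_isOpen_isPreconnected_closure_subset {s : Set X} (hso : IsOpen s)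
    (hs : IsPreconnected s) {x y : X} (hx : x ∈ s) (hy : y ∈ s) :
    ∃ K, IsOpen K ∧ IsPreconnected K ∧ x ∈ K ∧ y ∈ K ∧ closure K ⊆ s := by
  refine hs.induction₂ (fun x y => ∃ K, IsOpen K ∧ IsPreconnected K ∧ x ∈ K ∧ y ∈ K ∧
    closure K ⊆ s) (fun x hx => ?_) ?_ ?_ hx hy
  · obtain ⟨N, hN, hNc, hNs⟩ := exists_mem_nhds_isClosed_subset (hso.mem_nhds hx)
    have hxN : x ∈ interior N := mem_interior_iff_mem_nhds.2 hN
    have hV : IsOpen (connectedComponentIn (interior N) x) :=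
      isOpen_interior.connectedComponentIn
    filter_upwards [mem_nhdsWithin_of_mem_nhds (hV.mem_nhds (mem_connectedComponentIn hxN))]
      with y hy
    refine ⟨_, hV, isPreconnected_connectedComponentIn, mem_connectedComponentIn hxN, hy, ?_⟩
    exact (closure_mono ((connectedComponentIn_subset _ _).trans interior_subset)).trans
      (hNc.closure_subset.trans hNs)
  · rintro x y z - - - ⟨K₁, hK₁, hK₁c, hxK₁, hyK₁, hK₁s⟩ ⟨K₂, hK₂, hK₂c, hyK₂, hzK₂, hK₂s⟩
    exact ⟨K₁ ∪ K₂, hK₁.union hK₂, hK₁c.union y hyK₁ hyK₂ hK₂c, Or.inl hxK₁, Or.inr hzK₂,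
      closure_union (s := K₁) ▸ union_subset hK₁s hK₂s⟩
  · rintro x y - - ⟨K, hK, hKc, hxK, hyK, hKs⟩
    exact ⟨K, hK, hKc, hyK, hxK, hKs⟩

variable [T1Space X]

theorem isClosed_setOf_between : IsClosed {t : X × X × X | Between t.1 t.2.1 t.2.2} := by
  rw [← isOpen_compl_iff, isOpen_iff_mem_nhds]
  rintro ⟨u, w, v⟩ h
  have hwu : u ≠ w := fun hu => h (Or.inr (Or.inl hu.symm))
  obtain ⟨K, hKo, hK, huK, hvK, hKw⟩ :=
    isOpen_compl_singleton.connectedComponentIn.exists_isOpen_isPreconnected_closure_subset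
      isPreconnected_connectedComponentIn (mem_connectedComponentIn hwu)
      (mem_connectedComponentIn_compl_singleton_of_not_between h)
  have hw : w ∉ closure K := fun hw => hKw.trans (connectedComponentIn_subset _ _) hw rfl
  filter_upwards [prod_mem_nhds (hKo.mem_nhds huK)
    (prod_mem_nhds (isClosed_closure.isOpen_compl.mem_nhds hw) (hKo.mem_nhds hvK))]
  rintro ⟨u', w', v'⟩ ⟨hu', hw', hv'⟩ hB
  exact hw' (subset_closure (hK.mem_of_between hu' hv' hB))

theorem isClosed_setOf_intervalPreserving : IsClosed {f : X → X | IntervalPreserving f} := by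
  simp only [IntervalPreserving, ofPred_forall]
  refine isClosed_iInter fun u => isClosed_iInter fun w => isClosed_iInter fun v =>
    isClosed_iInter fun _ => isClosed_setOf_between.preimage
      (f := fun f : X → X => (f u, f w, f v)) (by fun_prop)

end LocallyConnected

section BaireClassOne

variable {X : Type*} [TopologicalSpace X]

theorem exists_countable_isClosed_isPreconnected_network [SecondCountableTopology X]
    [LocallyConnectedSpace X] [RegularSpace X] :
    ∃ 𝒦 : Set (Set X), 𝒦.Countable ∧ (∀ K ∈ 𝒦, IsClosed K ∧ IsPreconnected K) ∧
      ∀ O, IsOpen O → ∀ x ∈ O, ∃ K ∈ 𝒦, x ∈ K ∧ K ⊆ O := by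
  obtain ⟨b, hbc, -, hb⟩ := TopologicalSpace.exists_countable_basis X
  obtain ⟨Q, hQc, hQ⟩ := TopologicalSpace.exists_countable_dense X
  refine ⟨(fun sq : Set X × X => closure (connectedComponentIn sq.1 sq.2)) '' b ×ˢ Q,
    (hbc.prod hQc).image _, ?_, fun O hO x hx => ?_⟩
  · rintro _ ⟨⟨s, q⟩, -, rfl⟩
    exact ⟨isClosed_closure, isPreconnected_connectedComponentIn.closure⟩
  obtain ⟨N, hN, hNc, hNO⟩ := exists_mem_nhds_isClosed_subset (hO.mem_nhds hx)
  obtain ⟨s, hsb, hxs, hsN⟩ := hb.mem_nhds_iff.1 hN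
  -- every component of the open set `s` is open, so it is the component of a point of `Q`
  have hC : IsOpen (connectedComponentIn s x) := (hb.isOpen hsb).connectedComponentIn
  obtain ⟨q, hqQ, hq⟩ := hQ.exists_mem_open hC ⟨x, mem_connectedComponentIn hxs⟩
  refine ⟨_, ⟨(s, q), ⟨hsb, hqQ⟩, rfl⟩, ?_, ?_⟩ <;> dsimp only <;>
    rw [← connectedComponentIn_eq hq]
  · exact subset_closure (mem_connectedComponentIn hxs)
  · exact (closure_mono ((connectedComponentIn_subset _ _).trans hsN)).trans
      (hNc.closure_subset.trans hNO)

theorem IntervalPreserving.mem_of_mem_closure_preimage {p : X → X} (hp : IntervalPreserving p)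
    {K : Set X} (hK : IsPreconnected K) {z z' w : X} (hz : z ∈ closure (p ⁻¹' K))
    (hz' : z' ∈ closure (p ⁻¹' K)) (hw : Separates w z z') : p w ∈ K := by
  obtain ⟨U, V, hU, hV, hzU, hz'V, hUV, hc⟩ := hw
  obtain ⟨a, haU, haK⟩ := mem_closure_iff.1 hz U hU hzU
  obtain ⟨a', ha'V, ha'K⟩ := mem_closure_iff.1 hz' V hV hz'V
  exact hK.mem_of_between haK ha'K (hp _ _ _ (Or.inl ⟨U, V, hU, hV, haU, ha'V, hUV, hc⟩))

theorem closure_connectedComponentIn_compl_inter_nonempty [ConnectedSpace X]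
    [LocallyConnectedSpace X] {K : Set X} (hK : IsClosed K) (hKne : K.Nonempty) {y : X}
    (hy : y ∉ K) : (closure (connectedComponentIn Kᶜ y) ∩ K).Nonempty := by
  by_contra h
  rw [not_nonempty_iff_eq_empty, ← disjoint_iff_inter_eq_empty,
    ← subset_compl_iff_disjoint_right] at h
  have hclosed : IsClosed (connectedComponentIn Kᶜ y) := isClosed_of_closure_subset <|
    isPreconnected_connectedComponentIn.closure.subset_connectedComponentIn
      (subset_closure (mem_connectedComponentIn hy)) h
  have huniv := IsClopen.eq_univ ⟨hclosed, hK.isOpen_compl.connectedComponentIn⟩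
    ⟨y, mem_connectedComponentIn hy⟩
  obtain ⟨k, hk⟩ := hKne
  exact connectedComponentIn_subset _ _ (huniv ▸ mem_univ k : k ∈ connectedComponentIn Kᶜ y) hk

theorem IntervalPreserving.finite_closure_preimage_diff_preimage [CompactSpace X]
    [ConnectedSpace X] [LocallyConnectedSpace X] (hX : IsPointSeparated X) {p : X → X}
    (hp : IntervalPreserving p) {K O : Set X} (hK : IsClosed K) (hKc : IsPreconnected K)
    (hO : IsOpen O) (hKO : K ⊆ O) : (closure (p ⁻¹' K) \ p ⁻¹' O).Finite := by
  rcases K.eq_empty_or_nonempty with rfl | hKne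
  · simp
  set Z := closure (p ⁻¹' K) \ p ⁻¹' O
  have hpK : ∀ z ∈ Z, p z ∉ K := fun z hz h => hz.2 (hKO h)
  let A : Z → Set X := fun z => connectedComponentIn Kᶜ (p z)
  have hA : Pairwise (Disjoint on A) := by
    rintro ⟨z, hz⟩ ⟨z', hz'⟩ hne
    refine disjoint_connectedComponentIn_of_ne fun hzz' => ?_
    obtain ⟨w, hw⟩ := hX z z' fun h => hne (Subtype.ext h)
    have hpz' : p z' ∈ connectedComponentIn Kᶜ (p z) := hzz' ▸ mem_connectedComponentIn (hpK z' hz')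
    exact connectedComponentIn_subset _ _ (isPreconnected_connectedComponentIn.mem_of_between
      (mem_connectedComponentIn (hpK z hz)) hpz' (hp _ _ _ (Or.inl hw)))
      (hp.mem_of_mem_closure_preimage hKc hz.1 hz'.1 hw)
  exact finite_coe_iff.1 (hX.finite_of_pairwise_disjoint hO.isClosed_compl hK
    (disjoint_compl_left_iff_subset.2 hKO) hA (fun _ => isPreconnected_connectedComponentIn)
    (fun z => ⟨p z, mem_connectedComponentIn (hpK z z.2), z.2.2⟩)
    (fun z => closure_connectedComponentIn_compl_inter_nonempty hK hKne (hpK z z.2)))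

theorem IntervalPreserving.isGδ_compl_preimage [CompactSpace X] [ConnectedSpace X]
    [LocallyConnectedSpace X] [RegularSpace X] [SecondCountableTopology X] [T1Space X]
    (hX : IsPointSeparated X) {p : X → X} (hp : IntervalPreserving p) {O : Set X}
    (hO : IsOpen O) : IsGδ (p ⁻¹' O)ᶜ := by
  obtain ⟨𝒦, h𝒦, h𝒦K, h𝒦O⟩ := exists_countable_isClosed_isPreconnected_network (X := X)
  have hcompl : (p ⁻¹' O)ᶜ = ⋂ K ∈ {K ∈ 𝒦 | K ⊆ O},
      (closure (p ⁻¹' K))ᶜ ∪ (closure (p ⁻¹' K) \ p ⁻¹' O) := by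
    ext x
    simp only [mem_compl_iff, mem_iInter, mem_ofPred_eq, mem_union, Set.mem_sdiff]
    refine ⟨fun hx K _ => by tauto, fun h hx => ?_⟩
    obtain ⟨K, hK𝒦, hxK, hKO⟩ := h𝒦O O hO (p x) hx
    exact (h K ⟨hK𝒦, hKO⟩).elim (· (subset_closure hxK)) (·.2 hx)
  rw [hcompl]
  exact IsGδ.biInter (h𝒦.mono (sep_subset _ _)) fun K ⟨hK𝒦, hKO⟩ =>
    isClosed_closure.isOpen_compl.isGδ.union
      (hp.finite_closure_preimage_diff_preimage hX (h𝒦K K hK𝒦).1 (h𝒦K K hK𝒦).2 hO hKO).isGδ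

theorem IsGδ.exists_compl_eq_iUnion_isClosed {s : Set X} (hs : IsGδ s) :
    ∃ F : ℕ → Set X, (∀ n, IsClosed (F n)) ∧ sᶜ = ⋃ n, F n := by
  obtain ⟨f, hf, rfl⟩ := isGδ_iff_eq_iInter_nat.1 hs
  exact ⟨fun n => (f n)ᶜ, fun n => (hf n).isClosed_compl, compl_iInter f⟩

end BaireClassOne

theorem stmt_12_general {G D : Type*} [Group G]
    [TopologicalSpace D] [CompactSpace D] [ConnectedSpace D]
    [TopologicalSpace.MetrizableSpace D]
    [MulAction G D] [ContinuousConstSMul G D]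
    (hsep : ∀ u v : D, u ≠ v → ∃ w, Separates w u v)
    (p : D → D)
    (hp : p ∈ closure {q : D → D | ∃ g : G, q = fun x => g • x}) :
    (∀ u w v : D, Between u w v → Between (p u) (p w) (p v)) ∧
      ∀ O : Set D, IsOpen O → ∃ F : ℕ → Set D, (∀ n, IsClosed (F n)) ∧ p ⁻¹' O = ⋃ n, F n := by
  have : LocallyConnectedSpace D := IsPointSeparated.locallyConnectedSpace hsep
  have hpB : IntervalPreserving p := by
    refine isClosed_setOf_intervalPreserving.closure_subset_iff.2 ?_ hp
    rintro _ ⟨g, rfl⟩ u w v h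
    exact h.map_homeomorph (Homeomorph.smul g)
  refine ⟨hpB, fun O hO => ?_⟩
  simpa only [compl_compl] using (hpB.isGδ_compl_preimage hsep hO).exists_compl_eq_iUnion_isClosed

/-- If `G` acts on a dendrite `D`, then every element `p` of the enveloping
semigroup (the pointwise closure of the translations `x ↦ g • x` in `D → D`) is interval
preserving and of Baire class 1. -/
theorem stmt_12 {G D : Type*} [Group G]
    [TopologicalSpace D] [CompactSpace D] [T2Space D] [ConnectedSpace D]
    [TopologicalSpace.MetrizableSpace D]
    [MulAction G D] [ContinuousConstSMul G D]
    (hsep : ∀ u v : D, u ≠ v → ∃ w, Separates w u v)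
    (p : D → D)
    (hp : p ∈ closure {q : D → D | ∃ g : G, q = fun x => g • x}) :
    (∀ u w v : D, Between u w v → Between (p u) (p w) (p v)) ∧
      ∀ O : Set D, IsOpen O → ∃ F : ℕ → Set D, (∀ n, IsClosed (F n)) ∧ p ⁻¹' O = ⋃ n, F n :=
  stmt_12_general hsep p hp
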